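/- Let ω₁(x,y) = x²·cos y − y·sin y + y²·sin x + x·cos x and ω₂(x,y) = 4(y·cos x + x·sin y). Define Q(x,y) = −x⁴ − y⁴ − 4x²y·sin x·sin y + x²(−8·cos y·sin x − 2·sin²y − 1) + 4xy²·cos x·cos y − 16xy·cos x·sin y + 2x·cos x·(−8·cos y − sin x) + y²(−8·cos y·sin x + 2·sin²x − 3) + 2y·sin y·(cos y + 8·sin x) + 16·cos y·sin x + sin²x − sin²y + 4C + 1. Then there exists C₀ > 0 such that for all C ≤ −C₀, Q(x,y) ≠ 0 for all (x,y) ∈ ℝ². -/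

import Mathlib

noncomputable def Q (C x y : ℝ) : ℝ :=
  -x ^ 4 - y ^ 4 - 4 * x ^ 2 * y * Real.sin x * Real.sin y
  + x ^ 2 * (-8 * Real.cos y * Real.sin x - 2 * (Real.sin y) ^ 2 - 1)
  + 4 * x * y ^ 2 * Real.cos x * Real.cos y
  - 16 * x * y * Real.cos x * Real.sin y
  + 2 * x * Real.cos x * (-8 * Real.cos y - Real.sin x)
  + y ^ 2 * (-8 * Real.cos y * Real.sin x + 2 * (Real.sin x) ^ 2 - 3)
  + 2 * y * Real.sin y * (Real.cos y + 8 * Real.sin x)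
  + 16 * Real.cos y * Real.sin x + (Real.sin x) ^ 2 - (Real.sin y) ^ 2
  + 4 * C + 1


/-! Every sine and cosine lies in `[-1, 1]`, so `Q C x y - 4 C` is bounded above by a polynomial in
`|x|, |y|` with leading part `-|x|⁴ - |y|⁴`; that polynomial is at most `2000`, hence `Q C x y < 0`
as soon as `C < -500`. -/

lemma quartic_majorant_le (a b : ℝ) :
    -a ^ 4 - b ^ 4 + 4 * a ^ 2 * b + 4 * a * b ^ 2 + 7 * a ^ 2 + 16 * a * b + 7 * b ^ 2
      + 18 * a + 18 * b + 18 ≤ 2000 := by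
  nlinarith [sq_nonneg (a ^ 2 - 4 * b), sq_nonneg (b ^ 2 - 4 * a), sq_nonneg (a - b),
    sq_nonneg (a ^ 2 - 10), sq_nonneg (b ^ 2 - 10), sq_nonneg (a - 5), sq_nonneg (b - 5)]

lemma mul_le_abs_mul_of_abs_le {u v c : ℝ} (h : |v| ≤ c) : u * v ≤ |u| * c :=
  calc u * v ≤ |u| * |v| := abs_mul u v ▸ le_abs_self _
    _ ≤ |u| * c := mul_le_mul_of_nonneg_left h (abs_nonneg u)

lemma abs_mul_le_of_abs_le_one {a b c : ℝ} (ha : |a| ≤ 1) (hb : |b| ≤ c) : |a * b| ≤ c :=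
  abs_mul a b ▸ (mul_le_of_le_one_left (abs_nonneg b) ha).trans hb

open Real in
lemma Q_le (C x y : ℝ) : Q C x y ≤ 2000 + 4 * C := by
  have hsx := abs_sin_le_one x
  have hcx := abs_cos_le_one x
  have hsy := abs_sin_le_one y
  have hcy := abs_cos_le_one y
  have hcysx := abs_le.mp (abs_mul_le_of_abs_le_one hcy hsx)
  have h₁ : (-4 * x ^ 2 * y) * (sin x * sin y) ≤ |-4 * x ^ 2 * y| * 1 :=
    mul_le_abs_mul_of_abs_le (abs_mul_le_of_abs_le_one hsx hsy)
  have h₂ : (4 * x * y ^ 2) * (cos x * cos y) ≤ |4 * x * y ^ 2| * 1 :=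
    mul_le_abs_mul_of_abs_le (abs_mul_le_of_abs_le_one hcx hcy)
  have h₃ : (-16 * x * y) * (cos x * sin y) ≤ |-16 * x * y| * 1 :=
    mul_le_abs_mul_of_abs_le (abs_mul_le_of_abs_le_one hcx hsy)
  have h₄ : (2 * x) * (cos x * (-8 * cos y - sin x)) ≤ |2 * x| * 9 :=
    mul_le_abs_mul_of_abs_le <| abs_mul_le_of_abs_le_one hcx <| abs_le.mpr
      ⟨by linarith [cos_le_one y, sin_le_one x], by linarith [neg_one_le_cos y, neg_one_le_sin x]⟩
  have h₅ : (2 * y) * (sin y * (cos y + 8 * sin x)) ≤ |2 * y| * 9 :=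
    mul_le_abs_mul_of_abs_le <| abs_mul_le_of_abs_le_one hsy <| abs_le.mpr
      ⟨by linarith [neg_one_le_cos y, neg_one_le_sin x], by linarith [cos_le_one y, sin_le_one x]⟩
  have h₆ : x ^ 2 * (-8 * cos y * sin x - 2 * sin y ^ 2 - 1) ≤ x ^ 2 * 7 :=
    mul_le_mul_of_nonneg_left (by linarith [sq_nonneg (sin y)]) (sq_nonneg x)
  have h₇ : y ^ 2 * (-8 * cos y * sin x + 2 * sin x ^ 2 - 3) ≤ y ^ 2 * 7 :=
    mul_le_mul_of_nonneg_left (by linarith [sin_sq_le_one x]) (sq_nonneg y)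
  norm_num [abs_mul] at h₁ h₂ h₃ h₄ h₅
  have hM := quartic_majorant_le |x| |y|
  rw [Even.pow_abs (by decide), Even.pow_abs (by decide), sq_abs, sq_abs] at hM
  unfold Q
  linarith [sin_sq_le_one x, sq_nonneg (sin y)]

theorem Q_nonvanishing :
    ∃ C₀ : ℝ, 0 < C₀ ∧ ∀ C ≤ -C₀, ∀ x y : ℝ, Q C x y ≠ 0 :=
  ⟨501, by norm_num, fun C hC x y => (Q_le C x y).trans_lt (by linarith) |>.ne⟩
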